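/- Let P(x) be a monic polynomial of degree d with non-negative coefficients and P(0)=1, and define P°(α) := P(α^ε)·α^{((1-ε)/2)d} for ε ∈ {1,-1}. Then for all x > 0: if ε = 1, L̃_{P°}(x^ε) = L̃_P(x); and if ε = -1, L̃_{P°}(x^ε) = L̃_P(∞) - L̃_P(x), where L̃_P(∞) := lim_{t→∞} L̃_P(t). -/
import Mathlib
open MeasureTheory Set Filter intervalIntegral Real Polynomial Topology

/-- The Rogers dilogarithm of higher degree associated to a function `P`. -/
noncomputable def LPf (f : ℝ → ℝ) (x : ℝ) : ℝ :=
  (∫ u in (0:ℝ)..x, Real.log (f u) / u) - (1/2) * Real.log x * Real.log (f x)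

noncomputable def Qfun (P : Polynomial ℝ) (d : ℕ) : ℝ → ℝ := fun u => P.eval u⁻¹ * u ^ d

section PolyLemmas
variable {d : ℕ} {P : Polynomial ℝ}


lemma l_one_le (hcoeff : ∀ i, 0 ≤ P.coeff i) (h0 : P.coeff 0 = 1)
    {u : ℝ} (hu : 0 ≤ u) : 1 ≤ P.eval u := by
  rw [Polynomial.eval_eq_sum_range]
  have h := Finset.single_le_sum (f := fun i => P.coeff i * u ^ i)
    (s := Finset.range (P.natDegree + 1))
    (fun i _ => mul_nonneg (hcoeff i) (pow_nonneg hu i))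
    (Finset.mem_range.2 (Nat.succ_pos _))
  simpa [h0] using h

lemma l_pow_le (hP : P.Monic) (hdeg : P.natDegree = d) (hcoeff : ∀ i, 0 ≤ P.coeff i)
    {u : ℝ} (hu : 0 ≤ u) : u ^ d ≤ P.eval u := by
  rw [Polynomial.eval_eq_sum_range, hdeg, Finset.sum_range_succ]
  have h1 : P.coeff d = 1 := by
    have := hP.coeff_natDegree; rwa [hdeg] at this
  rw [h1, one_mul]
  have : 0 ≤ ∑ i ∈ Finset.range d, P.coeff i * u ^ i :=
    Finset.sum_nonneg fun i _ => mul_nonneg (hcoeff i) (pow_nonneg hu i)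
  linarith

lemma l_up (hdeg : P.natDegree = d) (hcoeff : ∀ i, 0 ≤ P.coeff i) (h0 : P.coeff 0 = 1)
    {y : ℝ} (hy : 0 < y) {u : ℝ} (hu : u ∈ Set.Ioc (0:ℝ) y) :
    P.eval u ≤ 1 + ((∑ i ∈ Finset.range (d+1), P.coeff i) * (max 1 y) ^ d) * u := by
  set S := ∑ i ∈ Finset.range (d+1), P.coeff i with hS
  set M := max 1 y with hM
  have hM1 : (1:ℝ) ≤ M := le_max_left _ _
  have hu0 : 0 ≤ u := hu.1.le
  have huM : u ≤ M := le_trans hu.2 (le_max_right _ _)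
  rw [Polynomial.eval_eq_sum_range, hdeg, Finset.sum_range_succ']
  rw [h0, pow_zero, one_mul]
  have key : ∀ i ∈ Finset.range d, P.coeff (i+1) * u ^ (i+1) ≤ P.coeff (i+1) * (M ^ d * u) := by
    intro i hi
    refine mul_le_mul_of_nonneg_left ?_ (hcoeff _)
    have h1 : u ^ (i+1) = u ^ i * u := pow_succ u i
    have h2 : u ^ i ≤ M ^ i := pow_le_pow_left₀ hu0 huM i
    have h3 : M ^ i ≤ M ^ d := pow_le_pow_right₀ hM1 (Nat.le_of_lt (Finset.mem_range.1 hi))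
    calc u ^ (i+1) = u ^ i * u := h1
    _ ≤ M ^ d * u := by
        refine mul_le_mul_of_nonneg_right (le_trans h2 h3) hu0
  have hsum := Finset.sum_le_sum key
  have hS' : ∑ i ∈ Finset.range d, P.coeff (i+1) ≤ S := by
    rw [hS, Finset.sum_range_succ']
    have : (0:ℝ) ≤ P.coeff 0 := hcoeff 0
    linarith
  have hrw : ∑ i ∈ Finset.range d, P.coeff (i+1) * (M ^ d * u)
      = (∑ i ∈ Finset.range d, P.coeff (i+1)) * (M ^ d * u) := by
    rw [Finset.sum_mul]
  have hMu : 0 ≤ M ^ d * u := mul_nonneg (pow_nonneg (by linarith) d) hu0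
  have : ∑ i ∈ Finset.range d, P.coeff (i+1) * u ^ (i+1) ≤ S * (M ^ d * u) := by
    refine le_trans hsum ?_
    rw [hrw]
    exact mul_le_mul_of_nonneg_right hS' hMu
  nlinarith [this]

lemma l_top (hP : P.Monic) (hdeg : P.natDegree = d) (hcoeff : ∀ i, 0 ≤ P.coeff i)
    {t : ℝ} (ht : 1 ≤ t) :
    P.eval t ≤ t ^ d + (∑ i ∈ Finset.range (d+1), P.coeff i) * t ^ (d-1) := by
  set S := ∑ i ∈ Finset.range (d+1), P.coeff i with hS
  have ht0 : (0:ℝ) ≤ t := by linarith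
  rw [Polynomial.eval_eq_sum_range, hdeg, Finset.sum_range_succ]
  have h1 : P.coeff d = 1 := by have := hP.coeff_natDegree; rwa [hdeg] at this
  rw [h1, one_mul]
  have key : ∀ i ∈ Finset.range d, P.coeff i * t ^ i ≤ P.coeff i * t ^ (d-1) := by
    intro i hi
    refine mul_le_mul_of_nonneg_left (pow_le_pow_right₀ ht ?_) (hcoeff i)
    exact Nat.le_sub_one_of_lt (Finset.mem_range.1 hi)
  have hsum := Finset.sum_le_sum key
  have hS' : ∑ i ∈ Finset.range d, P.coeff i ≤ S := by
    rw [hS, Finset.sum_range_succ]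
    have := hP.coeff_natDegree
    rw [hdeg] at this
    linarith [this ▸ (le_refl (1:ℝ))]
  have : ∑ i ∈ Finset.range d, P.coeff i * t ^ (d-1)
      = (∑ i ∈ Finset.range d, P.coeff i) * t ^ (d-1) := by rw [Finset.sum_mul]
  rw [this] at hsum
  have := mul_le_mul_of_nonneg_right hS' (pow_nonneg ht0 (d-1))
  linarith

lemma l_Qbd (hP : P.Monic) (hdeg : P.natDegree = d) (hcoeff : ∀ i, 0 ≤ P.coeff i)
    (hd : 1 ≤ d) {u : ℝ} (hu : u ∈ Set.Ioc (0:ℝ) 1) :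
    1 ≤ Qfun P d u ∧ Qfun P d u ≤ 1 + (∑ i ∈ Finset.range (d+1), P.coeff i) * u := by
  set S := ∑ i ∈ Finset.range (d+1), P.coeff i with hS
  have hu0 : 0 < u := hu.1
  have ht1 : 1 ≤ u⁻¹ := (one_le_inv_iff₀).2 ⟨hu0, hu.2⟩
  have ht0 : (0:ℝ) ≤ u⁻¹ := by positivity
  have hud : u ^ d = u ^ (d-1) * u := by
    conv_lhs => rw [show d = (d-1)+1 from (Nat.succ_pred_eq_of_pos hd).symm]
    rw [pow_succ]
  constructor
  · have h1 : (u⁻¹) ^ d ≤ P.eval u⁻¹ := l_pow_le hP hdeg hcoeff ht0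
    have : (u⁻¹) ^ d * u ^ d = 1 := by
      rw [← mul_pow, inv_mul_cancel₀ hu0.ne', one_pow]
    calc (1:ℝ) = (u⁻¹) ^ d * u ^ d := this.symm
    _ ≤ P.eval u⁻¹ * u ^ d := mul_le_mul_of_nonneg_right h1 (pow_nonneg hu0.le d)
  · have h2 : P.eval u⁻¹ ≤ (u⁻¹) ^ d + S * (u⁻¹) ^ (d-1) := l_top hP hdeg hcoeff ht1
    have hid : (u⁻¹) ^ d * u ^ d = 1 := by
      rw [← mul_pow, inv_mul_cancel₀ hu0.ne', one_pow]
    have hid2 : (u⁻¹) ^ (d-1) * u ^ d = u := by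
      rw [hud, ← mul_assoc, ← mul_pow, inv_mul_cancel₀ hu0.ne', one_pow, one_mul]
    have : P.eval u⁻¹ * u ^ d ≤ ((u⁻¹) ^ d + S * (u⁻¹) ^ (d-1)) * u ^ d :=
      mul_le_mul_of_nonneg_right h2 (pow_nonneg hu0.le d)
    calc Qfun P d u = P.eval u⁻¹ * u ^ d := rfl
    _ ≤ ((u⁻¹) ^ d + S * (u⁻¹) ^ (d-1)) * u ^ d := this
    _ = 1 + S * u := by rw [add_mul, hid, mul_assoc, hid2]

end PolyLemmas


lemma aux_bound {f : ℝ → ℝ} {y C : ℝ} (hC : 0 ≤ C)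
    (hbd : ∀ u ∈ Set.Ioc (0:ℝ) y, 1 ≤ f u ∧ f u ≤ 1 + C * u) :
    ∀ u ∈ Set.Ioc (0:ℝ) y, ‖Real.log (f u) / u‖ ≤ C := by
  intro u hu
  obtain ⟨h1, h2⟩ := hbd u hu
  have hu0 : 0 < u := hu.1
  have hl0 : 0 ≤ Real.log (f u) := Real.log_nonneg h1
  have hl1 : Real.log (f u) ≤ C * u := by
    have := Real.log_le_sub_one_of_pos (show (0:ℝ) < f u by linarith)
    linarith
  rw [Real.norm_eq_abs, abs_of_nonneg (div_nonneg hl0 hu0.le), div_le_iff₀ hu0]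
  exact hl1

lemma aux_intInt {f : ℝ → ℝ} (hf : Measurable f) {y C : ℝ} (hy : 0 < y) (hC : 0 ≤ C)
    (hbd : ∀ u ∈ Set.Ioc (0:ℝ) y, 1 ≤ f u ∧ f u ≤ 1 + C * u) :
    IntervalIntegrable (fun u => Real.log (f u) / u) MeasureTheory.volume 0 y := by
  rw [intervalIntegrable_iff_integrableOn_Ioc_of_le hy.le]
  have hm : Measurable fun u => Real.log (f u) / u :=
    (Real.measurable_log.comp hf).div measurable_id
  refine MeasureTheory.Integrable.mono' (g := fun _ => C)
    (MeasureTheory.integrable_const C) hm.aestronglyMeasurable.restrict ?_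
  filter_upwards [MeasureTheory.ae_restrict_mem measurableSet_Ioc] with u hu
  exact aux_bound hC hbd u hu

lemma aux_absint {f : ℝ → ℝ} {y C : ℝ} (hy : 0 < y) (hC : 0 ≤ C)
    (hbd : ∀ u ∈ Set.Ioc (0:ℝ) y, 1 ≤ f u ∧ f u ≤ 1 + C * u) :
    |∫ u in (0:ℝ)..y, Real.log (f u) / u| ≤ C * y := by
  have h := intervalIntegral.norm_integral_le_of_norm_le_const (C := C)
    (f := fun u => Real.log (f u) / u) (a := 0) (b := y) ?_
  · rw [Real.norm_eq_abs] at h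
    simpa [abs_of_pos hy] using h
  · intro u hu
    rw [Set.uIoc_of_le hy.le] at hu
    exact aux_bound hC hbd u hu

lemma LP_neg (d : ℕ) (P : Polynomial ℝ) (hP : P.Monic) (hdeg : P.natDegree = d)
    (hcoeff : ∀ i, 0 ≤ P.coeff i) (h0 : P.coeff 0 = 1) (hd : 1 ≤ d)
    (x : ℝ) (hx : 0 < x) (Linf : ℝ)
    (hLinf : Filter.Tendsto (fun t => LPf (fun u => P.eval u) t) Filter.atTop (nhds Linf))
    :
    LPf (Qfun P d) x⁻¹ = Linf - LPf (fun u => P.eval u) x := by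
  set S := ∑ i ∈ Finset.range (d+1), P.coeff i with hSdef
  have hS0 : 0 ≤ S := Finset.sum_nonneg fun i _ => hcoeff i
  have hPpos : ∀ u : ℝ, 0 ≤ u → (0:ℝ) < P.eval u := fun u hu =>
    lt_of_lt_of_le one_pos (l_one_le hcoeff h0 hu)
  have hPc : Continuous fun u : ℝ => P.eval u := P.continuous
  have hQmeas : Measurable (Qfun P d) :=
    (hPc.measurable.comp measurable_inv).mul ((continuous_pow d).measurable)
  have hQpos : ∀ u : ℝ, 0 < u → (0:ℝ) < Qfun P d u := fun u hu =>
    mul_pos (hPpos u⁻¹ (by positivity)) (pow_pos hu d)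
  have hgint : ∀ y : ℝ, 0 < y →
      IntervalIntegrable (fun u => Real.log (P.eval u) / u) volume 0 y := by
    intro y hy
    refine aux_intInt hPc.measurable (C := S * (max 1 y) ^ d) hy
      (mul_nonneg hS0 (pow_nonneg (le_trans zero_le_one (le_max_left 1 y)) d)) ?_
    intro u hu
    exact ⟨l_one_le hcoeff h0 hu.1.le, l_up hdeg hcoeff h0 hy hu⟩
  have hQcontAt : ∀ t : ℝ, 0 < t → ContinuousAt (Qfun P d) t := by
    intro t ht
    exact (hPc.continuousAt.comp (continuousAt_inv₀ ht.ne')).mul ((continuous_pow d).continuousAt)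
  have hhcont : ∀ t : ℝ, 0 < t → ContinuousAt (fun u => Real.log (Qfun P d u) / u) t := by
    intro t ht
    exact ((Real.continuousAt_log (hQpos t ht).ne').comp (hQcontAt t ht)).div
      continuousAt_id ht.ne'
  have hgcont : ∀ t : ℝ, 0 < t → ContinuousAt (fun u => Real.log (P.eval u) / u) t := by
    intro t ht
    have h1 : ContinuousAt (fun u : ℝ => P.eval u) t := hPc.continuousAt
    have h2 : ContinuousAt Real.log ((fun u : ℝ => P.eval u) t) :=
      Real.continuousAt_log (hPpos t ht.le).ne'
    exact (ContinuousAt.comp (g := Real.log) (f := fun u : ℝ => P.eval u) (x := t) h2 h1).div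
      continuousAt_id ht.ne'
  have hhint : ∀ y : ℝ, 0 < y →
      IntervalIntegrable (fun u => Real.log (Qfun P d u) / u) volume 0 y := by
    intro y hy
    rcases le_or_gt y 1 with h1 | h1
    · refine aux_intInt hQmeas hy hS0 ?_
      intro u hu
      exact l_Qbd hP hdeg hcoeff hd ⟨hu.1, le_trans hu.2 h1⟩
    · refine (aux_intInt hQmeas one_pos hS0 fun u hu => l_Qbd hP hdeg hcoeff hd hu).trans ?_
      refine ContinuousOn.intervalIntegrable ?_
      intro u hu
      rw [Set.uIcc_of_le h1.le] at hu
      exact (hhcont u (lt_of_lt_of_le one_pos hu.1)).continuousWithinAt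
  have hFder : ∀ t : ℝ, 0 < t →
      HasDerivAt (fun s => ∫ u in (0:ℝ)..s, Real.log (P.eval u) / u)
        (Real.log (P.eval t) / t) t := by
    intro t ht
    exact intervalIntegral.integral_hasDerivAt_right (hgint t ht)
      (((Real.measurable_log.comp hPc.measurable).div
        measurable_id).aestronglyMeasurable.stronglyMeasurableAtFilter)
      (hgcont t ht)
  have hGder : ∀ t : ℝ, 0 < t →
      HasDerivAt (fun s => ∫ u in (0:ℝ)..s, Real.log (Qfun P d u) / u)
        (Real.log (Qfun P d t) / t) t := by
    intro t ht
    exact intervalIntegral.integral_hasDerivAt_right (hhint t ht)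
      (((Real.measurable_log.comp hQmeas).div
        measurable_id).aestronglyMeasurable.stronglyMeasurableAtFilter)
      (hhcont t ht)
  have hQinv : ∀ t : ℝ, 0 < t →
      Real.log (Qfun P d t⁻¹) = Real.log (P.eval t) - d * Real.log t := by
    intro t ht
    have h1 : Qfun P d t⁻¹ = P.eval t * (t⁻¹) ^ d := by simp [Qfun]
    rw [h1, Real.log_mul (hPpos t ht.le).ne' (by positivity), Real.log_pow, Real.log_inv]
    ring
  set G : ℝ → ℝ := fun s => ∫ u in (0:ℝ)..s, Real.log (Qfun P d u) / u with hGdef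
  set Ψ : ℝ → ℝ := fun t =>
    (G t⁻¹ + (1/2) * (Real.log t * (Real.log (P.eval t) - d * Real.log t)))
    + LPf (fun u => P.eval u) t with hΨdef
  have hΨ0 : ∀ t : ℝ, 0 < t → HasDerivAt Ψ 0 t := by
    intro t ht
    have hp : (0:ℝ) < P.eval t := hPpos t ht.le
    have A1 : HasDerivAt (fun s => G s⁻¹)
        (Real.log (Qfun P d t⁻¹) / t⁻¹ * -((t:ℝ)^2)⁻¹) t :=
      HasDerivAt.comp t (hGder t⁻¹ (by positivity)) (hasDerivAt_inv ht.ne')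
    have A2 : HasDerivAt
        (fun s => (1/2:ℝ) * (Real.log s * (Real.log (P.eval s) - d * Real.log s)))
        ((1/2) * (t⁻¹ * (Real.log (P.eval t) - d * Real.log t)
          + Real.log t * (P.derivative.eval t / P.eval t - d * t⁻¹))) t :=
      HasDerivAt.const_mul _ ((Real.hasDerivAt_log ht.ne').mul
        (((P.hasDerivAt t).log hp.ne').sub
          (HasDerivAt.const_mul (d:ℝ) (Real.hasDerivAt_log ht.ne'))))
    have A3 : HasDerivAt (fun s => LPf (fun u => P.eval u) s)
        (Real.log (P.eval t) / t - ((1/2) * t⁻¹ * Real.log (P.eval t)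
          + (1/2) * Real.log t * (P.derivative.eval t / P.eval t))) t :=
      (hFder t ht).sub ((HasDerivAt.const_mul ((1/2):ℝ)
        (Real.hasDerivAt_log ht.ne')).mul ((P.hasDerivAt t).log hp.ne'))
    have H := (A1.add A2).add A3
    have hD : Real.log (Qfun P d t⁻¹) / t⁻¹ * -((t:ℝ)^2)⁻¹
        + (1/2) * (t⁻¹ * (Real.log (P.eval t) - d * Real.log t)
          + Real.log t * (P.derivative.eval t / P.eval t - d * t⁻¹))
        + (Real.log (P.eval t) / t - ((1/2) * t⁻¹ * Real.log (P.eval t)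
          + (1/2) * Real.log t * (P.derivative.eval t / P.eval t))) = 0 := by
      rw [hQinv t ht]
      field_simp
      ring
    rw [hD] at H
    exact H
  have hconst : ∀ s t : ℝ, 0 < s → 0 < t → Ψ s = Ψ t := by
    have key : ∀ a b : ℝ, 0 < a → a ≤ b → Ψ b = Ψ a := by
      intro a b ha hab
      have H := constant_of_has_deriv_right_zero (f := Ψ) (a := a) (b := b)
        (fun t ht => (hΨ0 t (lt_of_lt_of_le ha ht.1)).continuousAt.continuousWithinAt)
        (fun t ht => (hΨ0 t (lt_of_lt_of_le ha ht.1)).hasDerivWithinAt)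
      exact H b (Set.right_mem_Icc.2 hab)
    intro s t hs ht
    rcases le_total s t with h | h
    · exact (key s t hs h).symm
    · exact key t s ht h
  have tend1 : Tendsto (fun t => G t⁻¹) atTop (𝓝 0) := by
    have hb : ∀ᶠ t in atTop, ‖G t⁻¹‖ ≤ S * t⁻¹ := by
      filter_upwards [eventually_ge_atTop (1:ℝ)] with t ht
      have ht0 : (0:ℝ) < t := lt_of_lt_of_le one_pos ht
      have hti : (0:ℝ) < t⁻¹ := by positivity
      have habs := aux_absint (f := Qfun P d) hti hS0 ?_
      · rw [Real.norm_eq_abs]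
        exact habs
      · intro u hu
        exact l_Qbd hP hdeg hcoeff hd ⟨hu.1, le_trans hu.2 (inv_le_one_of_one_le₀ ht)⟩
    have hT : Tendsto (fun t : ℝ => S * t⁻¹) atTop (𝓝 0) := by
      simpa using tendsto_inv_atTop_zero.const_mul S
    exact squeeze_zero_norm' hb hT
  have tend2 : Tendsto
      (fun t => (1/2:ℝ) * (Real.log t * (Real.log (P.eval t) - d * Real.log t)))
      atTop (𝓝 0) := by
    have hb : ∀ᶠ t in atTop,
        ‖(1/2:ℝ) * (Real.log t * (Real.log (P.eval t) - d * Real.log t))‖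
        ≤ (1/2) * S * (Real.log t / t) := by
      filter_upwards [eventually_ge_atTop (1:ℝ)] with t ht
      have ht0 : (0:ℝ) < t := lt_of_lt_of_le one_pos ht
      have hl0 : 0 ≤ Real.log t := Real.log_nonneg ht
      have htd : (t:ℝ) ^ d = t ^ (d-1) * t := by
        conv_lhs => rw [show d = (d-1)+1 from (Nat.succ_pred_eq_of_pos hd).symm]
        rw [pow_succ]
      have hp : (0:ℝ) < P.eval t := hPpos t ht0.le
      have hub : P.eval t ≤ t ^ d + S * t ^ (d-1) := l_top hP hdeg hcoeff ht
      have hlb : t ^ d ≤ P.eval t := l_pow_le hP hdeg hcoeff ht0.le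
      have hlog1 : 0 ≤ Real.log (P.eval t) - d * Real.log t := by
        have h := Real.log_le_log (by positivity) hlb
        rw [Real.log_pow] at h
        linarith
      have hlog2 : Real.log (P.eval t) - d * Real.log t ≤ S / t := by
        have e1 : Real.log (P.eval t / t ^ d) = Real.log (P.eval t) - d * Real.log t := by
          rw [Real.log_div hp.ne' (by positivity), Real.log_pow]
        have e2 : Real.log (P.eval t / t ^ d) ≤ P.eval t / t ^ d - 1 :=
          Real.log_le_sub_one_of_pos (by positivity)
        have e3 : P.eval t / t ^ d ≤ 1 + S / t := by
          rw [div_le_iff₀ (pow_pos ht0 d)]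
          have e4 : (1 + S / t) * t ^ d = t ^ d + S * t ^ (d-1) := by
            rw [htd]; field_simp
          linarith
        rw [e1] at e2
        linarith
      have hmain : Real.log t * (Real.log (P.eval t) - d * Real.log t)
          ≤ S * (Real.log t / t) := by
        have h := mul_le_mul_of_nonneg_left hlog2 hl0
        calc Real.log t * (Real.log (P.eval t) - d * Real.log t)
            ≤ Real.log t * (S / t) := h
        _ = S * (Real.log t / t) := by ring
      rw [Real.norm_eq_abs, abs_of_nonneg (by positivity)]
      linarith
    have hT : Tendsto (fun t : ℝ => (1/2:ℝ) * S * (Real.log t / t)) atTop (𝓝 0) := by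
      have h := Real.isLittleO_log_id_atTop.tendsto_div_nhds_zero
      simpa using h.const_mul ((1/2:ℝ) * S)
    exact squeeze_zero_norm' hb hT
  have hΨtend : Tendsto Ψ atTop (𝓝 Linf) := by
    rw [hΨdef]
    have h := (tend1.add tend2).add hLinf
    simpa using h
  have hΨx : Ψ x = Linf := by
    have hcx : Tendsto Ψ atTop (𝓝 (Ψ x)) := by
      refine Tendsto.congr' ?_ (tendsto_const_nhds (x := Ψ x) (f := (atTop : Filter ℝ)))
      filter_upwards [eventually_gt_atTop (0:ℝ)] with t ht
      exact hconst x t hx ht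
    exact tendsto_nhds_unique hcx hΨtend
  have hfin : LPf (Qfun P d) x⁻¹
      = G x⁻¹ + (1/2) * (Real.log x * (Real.log (P.eval x) - d * Real.log x)) := by
    simp only [LPf, hGdef]
    rw [Real.log_inv, hQinv x hx]
    ring
  rw [hΨdef] at hΨx
  rw [hfin]
  linarith

/-- With `P°(α) := P(α^ε)·α^{((1-ε)/2)d}`: for `ε = 1`, `L̃_{P°}(x^ε) = L̃_P(x)`, and
for `ε = -1`, `L̃_{P°}(x^ε) = L̃_P(∞) - L̃_P(x)`. -/
theorem LP_circ_cases (d : ℕ) (P : Polynomial ℝ) (hP : P.Monic) (hdeg : P.natDegree = d)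
    (hcoeff : ∀ i, 0 ≤ P.coeff i) (h0 : P.coeff 0 = 1)
    (ε : ℤ) (hε : ε = 1 ∨ ε = -1)
    (Pc : ℝ → ℝ) (hPc : ∀ α : ℝ, Pc α = P.eval (α ^ ε) * α ^ (((1 - ε) / 2) * (d : ℤ)))
    (x : ℝ) (hx : 0 < x) :
    (ε = 1 → LPf Pc (x ^ ε) = LPf (fun u => P.eval u) x) ∧
    (ε = -1 → ∀ Linf : ℝ,
      Filter.Tendsto (fun t => LPf (fun u => P.eval u) t) Filter.atTop (nhds Linf) →
      LPf Pc (x ^ ε) = Linf - LPf (fun u => P.eval u) x) := by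
  constructor
  · intro h1
    subst h1
    have hPceq : Pc = fun u => P.eval u := by
      funext α
      rw [hPc α]
      norm_num
    rw [hPceq, zpow_one]
  · intro hm1 Linf hLinf
    subst hm1
    have hPcQ : Pc = Qfun P d := by
      funext α
      rw [hPc α]
      norm_num [Qfun, zpow_natCast]
    rcases Nat.eq_zero_or_pos d with hd0 | hd
    · subst hd0
      have hP1 : P = 1 := hP.natDegree_eq_zero.mp hdeg
      have hQ1 : Qfun P 0 = fun _ => 1 := by funext u; simp [Qfun, hP1]
      have hLP0 : (fun t => LPf (fun u => P.eval u) t) = fun _ => (0:ℝ) := by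
        funext t; simp [LPf, hP1]
      have hL0 : Linf = 0 := by
        rw [hLP0] at hLinf
        exact (tendsto_nhds_unique hLinf tendsto_const_nhds)
      rw [hPcQ, hQ1]
      simp [LPf, hL0, hP1]
    · rw [hPcQ]
      have hxz : (x : ℝ) ^ (-1:ℤ) = x⁻¹ := by simp [zpow_neg]
      rw [hxz]
      exact LP_neg d P hP hdeg hcoeff h0 hd x hx Linf hLinf
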